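/- Let s and t be positive integers, let M be an (s,t)-spike of order m ≥ 3·max{s,t} − 2, and let X ⊆ E(M) with |X| ≤ 2·min{s,t} − 1. Then λ(X) = |X|. -/

import Mathlib

open Set Function

namespace Matroid

variable {α : Type*}

/-- A circuit of a matroid: a minimal dependent set. -/
def IsCircuit' (M : Matroid α) (C : Set α) : Prop := Minimal M.Dep C

/-- A cocircuit of a matroid: a circuit of the dual matroid. -/
def IsCocircuit' (M : Matroid α) (C : Set α) : Prop := M✶.IsCircuit' C

/-- The `ℕ`-valued rank of a set `X` in a matroid `M`:
the size of a largest independent subset of `X`. -/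
noncomputable def rk' (M : Matroid α) (X : Set α) : ℕ :=
  sSup {n : ℕ | ∃ I, M.Indep I ∧ I ⊆ X ∧ I.ncard = n}

/-- The connectivity function `λ(X) = r(X) + r(E − X) − r(M)`. -/
noncomputable def lam' (M : Matroid α) (X : Set α) : ℕ :=
  M.rk' X + M.rk' (M.E \ X) - M.rk' M.E

/-- The `(s,u,t,v)`-property: every `s`-element subset of the ground set is contained in a
circuit of size `u`, and every `t`-element subset is contained in a cocircuit of size `v`. -/
def HasProp (M : Matroid α) (s u t v : ℕ) : Prop :=
  (∀ S ⊆ M.E, S.ncard = s → ∃ C, M.IsCircuit' C ∧ C.ncard = u ∧ S ⊆ C) ∧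
  (∀ T ⊆ M.E, T.ncard = t → ∃ C, M.IsCocircuit' C ∧ C.ncard = v ∧ T ⊆ C)

/-- A `t`-echidna of order `n`: a family of `n` pairwise disjoint `2`-element subsets of the
ground set (spines) such that the union of any `t` spines is a circuit.
(A `t`-coechidna of `M` is a `t`-echidna of `M✶`.) -/
def IsEchidna (M : Matroid α) (t : ℕ) {n : ℕ} (S : Fin n → Set α) : Prop :=
  (∀ i, S i ⊆ M.E) ∧ (∀ i, (S i).ncard = 2) ∧
  Pairwise (Function.onFun Disjoint S) ∧
  ∀ I : Finset (Fin n), I.card = t → M.IsCircuit' (⋃ i ∈ I, S i)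

/-- `M` is an `(s,t)`-spike with associated partition `(A 1, …, A m)`: the `A i` are `m`
pairwise disjoint pairs partitioning the ground set, with `m ≥ max s t`, such that the union of
any `s` pairs is a circuit and the union of any `t` pairs is a cocircuit. -/
def IsSpike (M : Matroid α) (s t : ℕ) {m : ℕ} (A : Fin m → Set α) : Prop :=
  max s t ≤ m ∧ (⋃ i, A i) = M.E ∧
  Pairwise (Function.onFun Disjoint A) ∧ (∀ i, (A i).ncard = 2) ∧
  (∀ I : Finset (Fin m), I.card = s → M.IsCircuit' (⋃ i ∈ I, A i)) ∧
  (∀ I : Finset (Fin m), I.card = t → M.IsCocircuit' (⋃ i ∈ I, A i))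

end Matroid

universe u

open Matroid

/-!
A set `X` that is independent and coindependent has `λ(X) = r(X) + r(E − X) − r(M) = |X|`,
since `E − X` is spanning. So it suffices to show that `X` is independent; coindependence is
the same statement for the dual `(t,s)`-spike. A circuit `C ⊆ X` meets at most `|C| ≤ 2s − 1`
arms, and the order bound leaves `t − 1` arms disjoint from `C`; together with any arm meeting
`C` they form a cocircuit, and a circuit never meets a cocircuit in exactly one element. Hence
`C` is a union of fewer than `s` arms, which is properly contained in the circuit formed by
`s` arms — impossible.
-/

open scoped Finset

namespace Matroid

variable {α : Type*} {M : Matroid α} {C I X Y : Set α}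

lemma rk'_eq_ncard_of_isBasis' [M.RankFinite] (hI : M.IsBasis' I X) : M.rk' X = I.ncard := by
  refine IsGreatest.csSup_eq ⟨⟨I, hI.indep, hI.subset, rfl⟩, ?_⟩
  rintro _ ⟨J, hJ, hJX, rfl⟩
  obtain ⟨J', hJ', hJJ'⟩ := hJ.subset_isBasis'_of_subset hJX
  calc J.ncard ≤ J'.ncard := ncard_le_ncard hJJ' hJ'.indep.finite
    _ = I.ncard := by rw [ncard_def, ncard_def, hJ'.encard_eq_encard hI]

lemma lam'_eq_ncard_of_indep_of_coindep [M.RankFinite] (hX : M.Indep X) (hX' : M.Coindep X) :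
    M.lam' X = X.ncard := by
  obtain ⟨B, hB, hBX⟩ := hX'.compl_spanning.exists_isBase_subset
  rw [lam', rk'_eq_ncard_of_isBasis' hX.isBasis_self.isBasis',
    rk'_eq_ncard_of_isBasis' (hB.isBasis_of_subset sdiff_subset hBX).isBasis',
    rk'_eq_ncard_of_isBasis' hB.isBasis_ground.isBasis', Nat.add_sub_cancel]

noncomputable def armsMeeting {m : ℕ} (A : Fin m → Set α) (Y : Set α) : Finset (Fin m) :=
  open scoped Classical in {i | (Y ∩ A i).Nonempty}

lemma mem_armsMeeting {m : ℕ} {A : Fin m → Set α} {i : Fin m} :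
    i ∈ armsMeeting A Y ↔ (Y ∩ A i).Nonempty := by
  simp [armsMeeting]

lemma card_armsMeeting_le {m : ℕ} {A : Fin m → Set α} (hA : Pairwise (Disjoint on A))
    (hY : Y.Finite) : #(armsMeeting A Y) ≤ Y.ncard := by
  rcases isEmpty_or_nonempty α with hα | hα
  · simp [armsMeeting, Set.eq_empty_of_isEmpty]
  choose! f hfY hfA using fun i (hi : i ∈ armsMeeting A Y) => mem_armsMeeting.mp hi
  rw [← ncard_coe_finset]
  refine ncard_le_ncard_of_injOn f hfY (fun i hi j hj hij => ?_) hY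
  by_contra hne
  exact (hA hne).ne_of_mem (hfA i hi) (hfA j hj) hij

namespace IsSpike

variable {s t m : ℕ} {A : Fin m → Set α}

lemma dual (hA : M.IsSpike s t A) : M✶.IsSpike t s A := by
  obtain ⟨hmax, hE, hdisj, hcard, hcirc, hcocirc⟩ := hA
  refine ⟨by rwa [max_comm], hE, hdisj, hcard, hcocirc, fun I hI => ?_⟩
  rw [IsCocircuit', dual_dual]
  exact hcirc I hI

lemma le_order_left (hA : M.IsSpike s t A) : s ≤ m :=
  (le_max_left s t).trans hA.1

lemma iUnion_eq_ground (hA : M.IsSpike s t A) : (⋃ i, A i) = M.E :=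
  hA.2.1

lemma pairwise_disjoint (hA : M.IsSpike s t A) : Pairwise (Disjoint on A) :=
  hA.2.2.1

lemma ncard_arm (hA : M.IsSpike s t A) (i : Fin m) : (A i).ncard = 2 :=
  hA.2.2.2.1 i

lemma isCircuit (hA : M.IsSpike s t A) {I : Finset (Fin m)} (hI : #I = s) :
    M.IsCircuit (⋃ i ∈ I, A i) :=
  hA.2.2.2.2.1 I hI

lemma isCocircuit (hA : M.IsSpike s t A) {I : Finset (Fin m)} (hI : #I = t) :
    M.IsCocircuit (⋃ i ∈ I, A i) :=
  hA.2.2.2.2.2 I hI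

lemma pos_left (hA : M.IsSpike s t A) : 0 < s := by
  obtain ⟨I, hI⟩ := Finset.exists_subset_card_eq (s := (Finset.univ : Finset (Fin m))) (n := s)
    (by simpa using hA.le_order_left)
  refine Nat.pos_of_ne_zero fun hs => ?_
  have hC := hA.isCircuit hI.2
  rw [Finset.card_eq_zero.mp (hI.2.trans hs)] at hC
  simpa using hC.nonempty

lemma pos_right (hA : M.IsSpike s t A) : 0 < t :=
  hA.dual.pos_left

lemma arm_finite (hA : M.IsSpike s t A) (i : Fin m) : (A i).Finite :=
  finite_of_ncard_pos (by rw [hA.ncard_arm i]; norm_num)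

lemma finite (hA : M.IsSpike s t A) : M.Finite :=
  ⟨hA.iUnion_eq_ground ▸ finite_iUnion hA.arm_finite⟩

lemma ncard_biUnion (hA : M.IsSpike s t A) (I : Finset (Fin m)) :
    (⋃ i ∈ I, A i).ncard = 2 * #I := by
  have h := I.finite_toSet.ncard_biUnion (fun i _ => hA.arm_finite i)
    (fun i _ j _ hij => hA.pairwise_disjoint hij)
  rw [finsum_mem_coe_finset] at h
  simpa [hA.ncard_arm, mul_comm] using h

lemma arm_subset_of_isCircuit (hA : M.IsSpike s t A) (hC : M.IsCircuit C)
    (hCm : #(armsMeeting A C) + t ≤ m + 1) {i : Fin m} (hi : (C ∩ A i).Nonempty) :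
    A i ⊆ C := by
  by_contra hAC
  obtain ⟨e, he⟩ : ∃ e, C ∩ A i = {e} := by
    refine ncard_eq_one.mp ?_
    have hlt : (C ∩ A i).ncard < (A i).ncard := ncard_lt_ncard
      (inter_subset_right.ssubset_of_ne fun h => hAC (h ▸ inter_subset_left)) (hA.arm_finite i)
    have hpos := (ncard_pos ((hA.arm_finite i).subset inter_subset_right)).mpr hi
    rw [hA.ncard_arm i] at hlt
    omega
  have hiC : i ∈ armsMeeting A C := mem_armsMeeting.mpr hi
  obtain ⟨K, hKC, hK⟩ := Finset.exists_subset_card_eq (s := (armsMeeting A C)ᶜ) (n := t - 1)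
    (by rw [Finset.card_compl, Fintype.card_fin]; omega)
  have hiK : i ∉ K := fun h => Finset.mem_compl.mp (hKC h) hiC
  have hD := hA.isCocircuit (I := insert i K)
    (by rw [Finset.card_insert_of_notMem hiK, hK]; have := hA.pos_right; omega)
  refine hC.inter_isCocircuit_ne_singleton hD (e := e) ?_
  rw [Finset.set_biUnion_insert, inter_union_distrib_left, he, union_eq_left]
  rintro x ⟨hxC, hx⟩
  obtain ⟨j, hj, hxj⟩ := mem_iUnion₂.mp hx
  exact absurd (mem_armsMeeting.mpr ⟨x, hxC, hxj⟩) (Finset.mem_compl.mp (hKC hj))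

lemma eq_biUnion_armsMeeting_of_isCircuit (hA : M.IsSpike s t A) (hC : M.IsCircuit C)
    (hCm : #(armsMeeting A C) + t ≤ m + 1) : C = ⋃ i ∈ armsMeeting A C, A i := by
  refine subset_antisymm (fun x hx => ?_)
    (iUnion₂_subset fun i hi => hA.arm_subset_of_isCircuit hC hCm (mem_armsMeeting.mp hi))
  have hxE : x ∈ ⋃ i, A i := hA.iUnion_eq_ground ▸ hC.subset_ground hx
  obtain ⟨i, hxi⟩ := mem_iUnion.mp hxE
  exact mem_iUnion₂.mpr ⟨i, mem_armsMeeting.mpr ⟨x, hx, hxi⟩, hxi⟩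

lemma two_mul_le_ncard_of_isCircuit (hA : M.IsSpike s t A) (hC : M.IsCircuit C)
    (hCm : C.ncard + t ≤ m + 1) : 2 * s ≤ C.ncard := by
  have := hA.finite
  set J := armsMeeting A C
  have hJC : #J ≤ C.ncard :=
    card_armsMeeting_le hA.pairwise_disjoint (M.ground_finite.subset hC.subset_ground)
  have hJ : #J + t ≤ m + 1 := by omega
  have hCJ := hA.eq_biUnion_armsMeeting_of_isCircuit hC hJ
  have hCcard : C.ncard = 2 * #J := (congrArg ncard hCJ).trans (hA.ncard_biUnion J)
  by_contra! hJs
  obtain ⟨I, hJI, -, hI⟩ := Finset.exists_subsuperset_card_eq (Finset.subset_univ J)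
    (by omega : #J ≤ s) (by simpa using hA.le_order_left)
  have hCI : C = ⋃ i ∈ I, A i := hC.eq_of_subset_isCircuit (hA.isCircuit hI)
    (hCJ.trans_subset (biUnion_subset_biUnion_left hJI))
  have := (congrArg ncard hCI).trans (hA.ncard_biUnion I)
  omega

lemma indep_of_ncard_lt (hA : M.IsSpike s t A) (hm : 2 * s + t ≤ m + 2) (hX : X ⊆ M.E)
    (hXs : X.ncard < 2 * s) : M.Indep X := by
  have := hA.finite
  by_contra hXi
  obtain ⟨C, hCX, hC⟩ := ((not_indep_iff hX).mp hXi).exists_isCircuit_subset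
  have hCXcard := ncard_le_ncard hCX (M.ground_finite.subset hX)
  have := hA.two_mul_le_ncard_of_isCircuit hC (by omega)
  omega

end IsSpike

end Matroid

theorem statement17_general {α : Type u} (s t m : ℕ)
    (M : Matroid α) (A : Fin m → Set α) (hA : M.IsSpike s t A)
    (hm : 3 * max s t - 2 ≤ m)
    (X : Set α) (hX : X ⊆ M.E) (hXcard : X.ncard ≤ 2 * min s t - 1) :
    M.lam' X = X.ncard := by
  have := hA.finite
  have := hA.pos_left
  have := hA.pos_right
  exact lam'_eq_ncard_of_indep_of_coindep (hA.indep_of_ncard_lt (by omega) hX (by omega))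
    (hA.dual.indep_of_ncard_lt (by omega) hX (by omega))

/-- If `M` is an `(s,t)`-spike of order `m ≥ 3·max{s,t} − 2` and `X ⊆ E(M)`
with `|X| ≤ 2·min{s,t} − 1`, then `λ(X) = |X|`. -/
theorem statement17 {α : Type u} (s t m : ℕ) (hs : 0 < s) (ht : 0 < t)
    (M : Matroid α) (A : Fin m → Set α) (hA : M.IsSpike s t A)
    (hm : 3 * max s t - 2 ≤ m)
    (X : Set α) (hX : X ⊆ M.E) (hXcard : X.ncard ≤ 2 * min s t - 1) :
    M.lam' X = X.ncard :=
  statement17_general s t m M A hA hm X hX hXcard
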